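/- Let b ∈ C with q(b) ≠ 0, and let M, M' be the two type-2 vertex lattices containing Λ_b. Then for every type-2 vertex lattice Λ one has n(b,Λ) = ord_{π₀}(q(b)) − min(d_G(Λ,M), d_G(Λ,M')). -/

import Mathlib

noncomputable section

attribute [local instance] Classical.propDecidable

variable {F : Type} [Field F]

/-- Membership in the valuation ring `O_F = {x : F | x = 0 ∨ v x ≥ 0}`. -/
def inO (v : F → ℤ) (x : F) : Prop := x = 0 ∨ 0 ≤ v x

/-- The Hermitian form `h(x, y) = x₁ · σ(y₂) + x₂ · σ(y₁)` on `C = F²`. -/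
def herm (σ : F →+* F) (x y : F × F) : F := x.1 * σ y.2 + x.2 * σ y.1

/-- The `O_F`-span of two vectors of `C = F²`. -/
def spanL (v : F → ℤ) (u w : F × F) : Set (F × F) :=
  {x | ∃ a b : F, inO v a ∧ inO v b ∧ x = a • u + b • w}

/-- An `O_F`-lattice in `C`: a free rank-2 `O_F`-submodule spanning `C` over `F`. -/
def IsLattice (v : F → ℤ) (Λ : Set (F × F)) : Prop :=
  ∃ u w : F × F, LinearIndependent F ![u, w] ∧ Λ = spanL v u w

/-- The dual lattice `Λ^♯ = {x ∈ C | h(x, Λ) ⊆ O_F}`. -/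
def dualL (σ : F →+* F) (v : F → ℤ) (Λ : Set (F × F)) : Set (F × F) :=
  {x | ∀ y ∈ Λ, inO v (herm σ x y)}

/-- A vertex lattice of type 0: a self-dual lattice. -/
def IsVertex0 (σ : F →+* F) (v : F → ℤ) (Λ : Set (F × F)) : Prop :=
  IsLattice v Λ ∧ dualL σ v Λ = Λ

/-- A vertex lattice of type 2: a lattice with `Λ^♯ = π Λ`
(equivalently `πΛ ⊆ Λ^♯ ⊆ Λ` with `Λ/Λ^♯` two-dimensional over the residue field). -/
def IsVertex2 (σ : F →+* F) (π : F) (v : F → ℤ) (Λ : Set (F × F)) : Prop :=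
  IsLattice v Λ ∧ dualL σ v Λ = (fun x => π • x) '' Λ

/-- A vertex lattice (of type 0 or type 2). -/
def IsVertex (σ : F →+* F) (π : F) (v : F → ℤ) (Λ : Set (F × F)) : Prop :=
  IsVertex0 σ v Λ ∨ IsVertex2 σ π v Λ

/-- `nIs π b Λ n` says that `n = n(b, Λ)` is the largest integer `m` with `π⁻ᵐ b ∈ Λ`. -/
def nIs (π : F) (b : F × F) (Λ : Set (F × F)) (n : ℤ) : Prop :=
  IsGreatest {m : ℤ | (π ^ (-m)) • b ∈ Λ} n

/-- Adjacency of type-2 vertex lattices: distinct, with intersection a type-0 vertex lattice. -/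
def AdjV (σ : F →+* F) (π : F) (v : F → ℤ) (Λ Λ' : Set (F × F)) : Prop :=
  IsVertex2 σ π v Λ ∧ IsVertex2 σ π v Λ' ∧ Λ ≠ Λ' ∧ IsVertex0 σ v (Λ ∩ Λ')

/-- There is a walk of length `k` between `Λ` and `Λ'` in the Bruhat–Tits tree. -/
def WalkN (σ : F →+* F) (π : F) (v : F → ℤ) (k : ℕ) (Λ Λ' : Set (F × F)) : Prop :=
  ∃ f : ℕ → Set (F × F), f 0 = Λ ∧ f k = Λ' ∧ ∀ i < k, AdjV σ π v (f i) (f (i + 1))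

/-- `dGIs σ π v Λ Λ' k` : the graph distance `d_G(Λ, Λ')` equals `k`. -/
def dGIs (σ : F →+* F) (π : F) (v : F → ℤ) (Λ Λ' : Set (F × F)) (k : ℕ) : Prop :=
  IsLeast {j : ℕ | WalkN σ π v j Λ Λ'} k

/-- `P` is a type-2 "hull" of the vertex lattice `Λ`: `P = Λ` when `Λ` has type 2,
and `P` is a type-2 vertex lattice containing `Λ` when `Λ` has type 0. -/
def HullOf (σ : F →+* F) (π : F) (v : F → ℤ) (Λ P : Set (F × F)) : Prop :=
  (IsVertex2 σ π v Λ ∧ P = Λ) ∨ (IsVertex0 σ v Λ ∧ IsVertex2 σ π v P ∧ Λ ⊆ P)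

/-- `DTwice σ π v Λ Λ' m` : twice the tree distance `D(Λ, Λ')` equals `m`
(type-0 vertex lattices are midpoints of edges, contributing `1/2` each). -/
def DTwice (σ : F →+* F) (π : F) (v : F → ℤ) (Λ Λ' : Set (F × F)) (m : ℕ) : Prop :=
  (Λ = Λ' ∧ m = 0) ∨
  (Λ ≠ Λ' ∧ ∃ k : ℕ,
    IsLeast {j : ℕ | ∃ P Q, HullOf σ π v Λ P ∧ HullOf σ π v Λ' Q ∧ WalkN σ π v j P Q} k ∧
    (m : ℤ) = 2 * k + (if IsVertex0 σ v Λ then 1 else 0) +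
      (if IsVertex0 σ v Λ' then 1 else 0))

/-- `g ∈ GL₂(O_F)`. -/
def InGL2O (v : F → ℤ) (g : Matrix (Fin 2) (Fin 2) F) : Prop :=
  (∀ i j, inO v (g i j)) ∧
    ∃ g' : Matrix (Fin 2) (Fin 2) F, (∀ i j, inO v (g' i j)) ∧ g * g' = 1 ∧ g' * g = 1

/-- Equivalence of Hermitian matrices: `T ≈ T'` iff `gᵗ T ḡ = T'` for some `g ∈ GL₂(O_F)`. -/
def HermEquiv (σ : F →+* F) (v : F → ℤ) (T T' : Matrix (Fin 2) (Fin 2) F) : Prop :=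
  ∃ g, InGL2O v g ∧ g.transpose * T * g.map (fun x => σ x) = T'

/-- `u` is a unit of `O_{F₀}`. -/
def IsUnitO₀ (σ : F →+* F) (v : F → ℤ) (u : F) : Prop :=
  σ u = u ∧ u ≠ 0 ∧ v u = 0

/-- `x` is a norm from `F^×`. -/
def IsNorm (σ : F →+* F) (x : F) : Prop := ∃ y : F, y ≠ 0 ∧ x = y * σ y


/-! Put `c = π^{-α} b`, a vector of unit norm. A walk of length `d` from `Λ` to a lattice `T`
gives `π^d T ⊆ Λ`, because `πΛ' ⊆ Λ` for adjacent `Λ, Λ'`; applied to a walk from `Λ` to `M`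
or `M'` (which contain `c ∈ Λ_b`) this yields `n(b, Λ) ≥ α - d`.

Conversely, let `π^j c ∈ Λ`. If `j > 0` and `π^{j-1} c ∉ Λ`, then `x = π^j c` is primitive in
`Λ` with `q(x) ∈ π² O_F`; writing `Λ = ⟨x, w⟩`, the neighbour `⟨π⁻¹ x, π w⟩` of `Λ` contains
`π^{j-1} c`. After at most `j` such steps we reach a lattice `Λ = ⟨c, w⟩`, and then
`⟨c, π w⟩ ⊆ Λ` is self-dual and contains `c`. A self-dual lattice containing a vector of unit
norm is unique (it consists of the `z` with `h(z, c)` and `q(z)` integral), so `⟨c, π w⟩ = Λ_b`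
and `Λ ∈ {M, M'}`; hence `n(b, Λ) ≤ α - d`. -/

/-- `v` is the normalized valuation of `F` on `F^×`, `σ` the Galois involution of the ramified
quadratic extension `F / F^σ`, and `π` a uniformizer with `σ π = -π`. -/
structure IsRamifiedValuation (σ : F →+* F) (π : F) (v : F → ℤ) : Prop where
  σ_σ : ∀ x, σ (σ x) = x
  σ_π : σ π = -π
  π_ne_zero : π ≠ 0
  v_π : v π = 1
  v_σ : ∀ x, v (σ x) = v x
  v_mul : ∀ x y : F, x ≠ 0 → y ≠ 0 → v (x * y) = v x + v y
  min_le_v_add : ∀ x y : F, x ≠ 0 → y ≠ 0 → x + y ≠ 0 → min (v x) (v y) ≤ v (x + y)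
  even_v_of_σ_eq : ∀ x : F, σ x = x → x ≠ 0 → Even (v x)

/-- `x ∈ π^n O_F`; the disjunct `x = 0` makes this independent of the junk value `v 0`. -/
def ValGe (v : F → ℤ) (x : F) (n : ℤ) : Prop := x = 0 ∨ n ≤ v x

@[simp] lemma inO_iff_valGe {v : F → ℤ} {x : F} : inO v x ↔ ValGe v x 0 := Iff.rfl

lemma valGe_zero (v : F → ℤ) (n : ℤ) : ValGe v 0 n := Or.inl rfl

lemma ValGe.of_le {v : F → ℤ} {x : F} {n : ℤ} (h : n ≤ v x) : ValGe v x n := Or.inr h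

lemma ValGe.mono {v : F → ℤ} {x : F} {n m : ℤ} (h : ValGe v x n) (hmn : m ≤ n) : ValGe v x m :=
  h.imp_right hmn.trans

lemma ValGe.le_v {v : F → ℤ} {x : F} {n : ℤ} (h : ValGe v x n) (hx : x ≠ 0) : n ≤ v x :=
  h.resolve_left hx

lemma ValGe.not_of_lt {v : F → ℤ} {x : F} {n : ℤ} (hx : x ≠ 0) (h : v x < n) : ¬ ValGe v x n := by
  rintro (h0 | hle)
  exacts [hx h0, h.not_ge hle]

lemma ValGe.unit_of_not_one {v : F → ℤ} {x : F} (hx : ValGe v x 0) (h1 : ¬ ValGe v x 1) :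
    x ≠ 0 ∧ v x = 0 := by
  simp only [ValGe, not_or] at h1
  exact ⟨h1.1, by have := hx.le_v h1.1; omega⟩

namespace IsRamifiedValuation

variable {σ : F →+* F} {π : F} {v : F → ℤ} (hv : IsRamifiedValuation σ π v)
include hv

lemma v_one : v 1 = 0 := by
  have := hv.v_mul 1 1 one_ne_zero one_ne_zero
  simp only [mul_one] at this
  omega

lemma v_inv {x : F} (hx : x ≠ 0) : v x⁻¹ = - v x := by
  have := hv.v_mul x x⁻¹ hx (inv_ne_zero hx)
  rw [mul_inv_cancel₀ hx, hv.v_one] at this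
  omega

lemma v_neg {x : F} (hx : x ≠ 0) : v (-x) = v x := by
  have h1 : v (-1 : F) = 0 := by
    have := hv.v_mul (-1) (-1) (by norm_num) (by norm_num)
    rw [neg_one_mul, neg_neg, hv.v_one] at this
    omega
  rw [← neg_one_mul, hv.v_mul _ _ (by norm_num) hx, h1, zero_add]

lemma v_pow (n : ℕ) : v (π ^ n) = n := by
  induction n with
  | zero => simpa using hv.v_one
  | succ n ih =>
    rw [pow_succ, hv.v_mul _ _ (pow_ne_zero _ hv.π_ne_zero) hv.π_ne_zero, ih, hv.v_π]
    push_cast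
    ring

lemma v_zpow (n : ℤ) : v (π ^ n) = n := by
  obtain ⟨m, rfl | rfl⟩ := n.eq_nat_or_neg
  · rw [zpow_natCast, hv.v_pow]
  · rw [zpow_neg, zpow_natCast, hv.v_inv (pow_ne_zero _ hv.π_ne_zero), hv.v_pow]

lemma valGe_zpow (n : ℤ) : ValGe v (π ^ n) n := .of_le (hv.v_zpow n).ge

lemma valGe_add {x y : F} {n : ℤ} (hx : ValGe v x n) (hy : ValGe v y n) : ValGe v (x + y) n := by
  by_cases hx0 : x = 0
  · simpa [hx0] using hy
  by_cases hy0 : y = 0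
  · simpa [hy0] using hx
  by_cases hxy : x + y = 0
  · exact Or.inl hxy
  exact .of_le ((le_min (hx.le_v hx0) (hy.le_v hy0)).trans (hv.min_le_v_add x y hx0 hy0 hxy))

lemma valGe_neg {x : F} {n : ℤ} (hx : ValGe v x n) : ValGe v (-x) n := by
  by_cases hx0 : x = 0
  · simp [hx0, valGe_zero]
  exact .of_le (by rw [hv.v_neg hx0]; exact hx.le_v hx0)

lemma valGe_sub {x y : F} {n : ℤ} (hx : ValGe v x n) (hy : ValGe v y n) : ValGe v (x - y) n := by
  rw [sub_eq_add_neg]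
  exact hv.valGe_add hx (hv.valGe_neg hy)

lemma valGe_mul {x y : F} {n m : ℤ} (hx : ValGe v x n) (hy : ValGe v y m) :
    ValGe v (x * y) (n + m) := by
  by_cases hx0 : x = 0
  · simp [hx0, valGe_zero]
  by_cases hy0 : y = 0
  · simp [hy0, valGe_zero]
  exact .of_le (by rw [hv.v_mul x y hx0 hy0]; exact add_le_add (hx.le_v hx0) (hy.le_v hy0))

lemma valGe_map {x : F} {n : ℤ} (hx : ValGe v x n) : ValGe v (σ x) n := by
  rcases hx with rfl | hx
  · simpa using valGe_zero v n
  · exact .of_le (by rwa [hv.v_σ])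

lemma valGe_mul_iff {u y : F} (hu : u ≠ 0) {n : ℤ} :
    ValGe v (u * y) n ↔ ValGe v y (n - v u) := by
  by_cases hy : y = 0
  · simp [hy, valGe_zero]
  simp only [ValGe, mul_eq_zero, hu, hy, false_or, hv.v_mul u y hu hy]
  omega

lemma v_add_of_lt {x y : F} (hx : x ≠ 0) (hy : ValGe v y (v x + 1)) :
    x + y ≠ 0 ∧ v (x + y) = v x := by
  by_cases hy0 : y = 0
  · simpa [hy0] using hx
  replace hy := hy.le_v hy0
  have hxy : x + y ≠ 0 := by
    intro h
    rw [eq_neg_of_add_eq_zero_right h, hv.v_neg hx] at hy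
    omega
  refine ⟨hxy, le_antisymm ?_ ?_⟩
  · have := hv.min_le_v_add (x + y) (-y) hxy (neg_ne_zero.mpr hy0) (by simpa using hx)
    rw [add_neg_cancel_right, hv.v_neg hy0] at this
    omega
  · have := hv.min_le_v_add x y hx hy0 hxy
    omega

end IsRamifiedValuation

section Hermitian

variable {σ : F →+* F}

@[simp] lemma herm_add_left (x y z : F × F) : herm σ (x + y) z = herm σ x z + herm σ y z := by
  simp only [herm, Prod.fst_add, Prod.snd_add]
  ring

@[simp] lemma herm_add_right (x y z : F × F) : herm σ x (y + z) = herm σ x y + herm σ x z := by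
  simp only [herm, Prod.fst_add, Prod.snd_add, map_add]
  ring

@[simp] lemma herm_smul_left (a : F) (x y : F × F) : herm σ (a • x) y = a * herm σ x y := by
  simp only [herm, Prod.smul_fst, Prod.smul_snd, smul_eq_mul]
  ring

@[simp] lemma herm_smul_right (a : F) (x y : F × F) : herm σ x (a • y) = σ a * herm σ x y := by
  simp only [herm, Prod.smul_fst, Prod.smul_snd, smul_eq_mul, map_mul]
  ring

lemma herm_swap (hσ : ∀ x, σ (σ x) = x) (x y : F × F) : herm σ y x = σ (herm σ x y) := by
  simp only [herm, map_add, map_mul, hσ]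
  ring

end Hermitian

section Determinant

def det2 (x y : F × F) : F := x.1 * y.2 - x.2 * y.1

lemma det2_smul_add_smul (x y : F × F) (a b c d : F) :
    det2 (a • x + b • y) (c • x + d • y) = (a * d - b * c) * det2 x y := by
  simp only [det2, Prod.fst_add, Prod.snd_add, Prod.smul_fst, Prod.smul_snd, smul_eq_mul]
  ring

lemma det2_smul_smul (x y : F × F) (a b : F) : det2 (a • x) (b • y) = a * b * det2 x y := by
  simp only [det2, Prod.smul_fst, Prod.smul_snd, smul_eq_mul]
  ring

lemma smul_add_smul_injective {x y : F × F} (hd : det2 x y ≠ 0) {s t s' t' : F}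
    (he : s • x + t • y = s' • x + t' • y) : s = s' ∧ t = t' := by
  have e1 := congrArg Prod.fst he
  have e2 := congrArg Prod.snd he
  simp only [Prod.fst_add, Prod.snd_add, Prod.smul_fst, Prod.smul_snd, smul_eq_mul] at e1 e2
  constructor
  · refine sub_eq_zero.mp ((mul_eq_zero.mp ?_).resolve_right hd)
    simp only [det2]
    linear_combination y.2 * e1 - y.1 * e2
  · refine sub_eq_zero.mp ((mul_eq_zero.mp ?_).resolve_right hd)
    simp only [det2]
    linear_combination x.1 * e2 - x.2 * e1

lemma exists_eq_smul_add_smul {x y : F × F} (hd : det2 x y ≠ 0) (z : F × F) :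
    ∃ s t : F, z = s • x + t • y := by
  refine ⟨(z.1 * y.2 - z.2 * y.1) / det2 x y, (x.1 * z.2 - x.2 * z.1) / det2 x y, ?_⟩
  ext <;> simp only [Prod.fst_add, Prod.snd_add, Prod.smul_fst, Prod.smul_snd, smul_eq_mul] <;>
    rw [div_mul_eq_mul_div, div_mul_eq_mul_div, ← add_div, eq_div_iff hd] <;>
    simp only [det2] <;> ring

lemma linearIndependent_iff_det2_ne_zero {x y : F × F} :
    LinearIndependent F ![x, y] ↔ det2 x y ≠ 0 := by
  rw [LinearIndependent.pair_iff]
  refine ⟨fun h hd => ?_, fun hd s t hst => ?_⟩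
  · have h2 := h y.2 (-x.2)
      (Prod.ext (by simp [det2] at hd ⊢; linear_combination hd) (by simp; ring))
    have h1 := h (-y.1) x.1
      (Prod.ext (by simp; ring) (by simp [det2] at hd ⊢; linear_combination hd))
    have hx : x = 0 := Prod.ext h1.2 (neg_eq_zero.mp h2.2)
    exact one_ne_zero (h 1 0 (by simp [hx])).1
  · simpa using smul_add_smul_injective hd (t := t) (s' := 0) (t' := 0) (by simpa using hst)

end Determinant

section Lattices

variable {σ : F →+* F} {π : F} {v : F → ℤ}

lemma smul_add_smul_mem_spanL {x y : F × F} {a b : F} (ha : inO v a) (hb : inO v b) :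
    a • x + b • y ∈ spanL v x y :=
  ⟨a, b, ha, hb, rfl⟩

lemma image_smul_spanL (u : F) (x y : F × F) :
    (u • ·) '' spanL v x y = spanL v (u • x) (u • y) := by
  ext z
  constructor
  · rintro ⟨_, ⟨a, b, ha, hb, rfl⟩, rfl⟩
    exact ⟨a, b, ha, hb, by simp only [smul_add, smul_comm u]⟩
  · rintro ⟨a, b, ha, hb, rfl⟩
    exact ⟨a • x + b • y, ⟨a, b, ha, hb, rfl⟩, by simp only [smul_add, smul_comm u]⟩

lemma IsVertex0.inO_herm {Λ : Set (F × F)} (hΛ : IsVertex0 σ v Λ) {z z' : F × F} (hz : z ∈ Λ)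
    (hz' : z' ∈ Λ) : inO v (herm σ z z') := by
  rw [← hΛ.2] at hz
  exact hz z' hz'

lemma AdjV.smul_mem {Λ Λ' : Set (F × F)} (hadj : AdjV σ π v Λ Λ') {z : F × F} (hz : z ∈ Λ') :
    π • z ∈ Λ := by
  obtain ⟨-, hΛ', -, hΛΛ'⟩ := hadj
  have hdual : π • z ∈ dualL σ v Λ' := by
    rw [hΛ'.2]
    exact ⟨z, hz, rfl⟩
  have hdual' : π • z ∈ dualL σ v (Λ ∩ Λ') := fun y hy => hdual y hy.2
  rw [hΛΛ'.2] at hdual'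
  exact hdual'.1

lemma WalkN.refl (Λ : Set (F × F)) : WalkN σ π v 0 Λ Λ :=
  ⟨fun _ => Λ, rfl, rfl, fun _ hi => absurd hi (Nat.not_lt_zero _)⟩

lemma WalkN.cons {n : ℕ} {Λ Λ₁ T : Set (F × F)} (hadj : AdjV σ π v Λ Λ₁)
    (hw : WalkN σ π v n Λ₁ T) : WalkN σ π v (n + 1) Λ T := by
  obtain ⟨f, rfl, rfl, hf⟩ := hw
  refine ⟨fun i => Nat.casesOn i Λ f, rfl, rfl, fun i hi => ?_⟩
  cases i with
  | zero => exact hadj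
  | succ i => exact hf i (by omega)

lemma WalkN.smul_mem {n : ℕ} {Λ T : Set (F × F)} (hw : WalkN σ π v n Λ T) {z : F × F}
    (hz : z ∈ T) : π ^ n • z ∈ Λ := by
  induction n generalizing Λ with
  | zero => obtain ⟨f, rfl, rfl, -⟩ := hw; simpa using hz
  | succ n ih =>
    obtain ⟨f, rfl, rfl, hf⟩ := hw
    have htail : WalkN σ π v n (f 1) (f (n + 1)) :=
      ⟨fun i => f (i + 1), rfl, rfl, fun i hi => hf (i + 1) (by omega)⟩
    rw [pow_succ', mul_smul]
    exact (hf 0 n.succ_pos).smul_mem (ih htail)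

end Lattices

def spanPow (π : F) (v : F → ℤ) (x w : F × F) (a b : ℤ) : Set (F × F) :=
  spanL v (π ^ a • x) (π ^ b • w)

lemma spanPow_zero_zero (π : F) (v : F → ℤ) (x w : F × F) : spanPow π v x w 0 0 = spanL v x w := by
  simp [spanPow]

namespace IsRamifiedValuation

variable {σ : F →+* F} {π : F} {v : F → ℤ} (hv : IsRamifiedValuation σ π v)
include hv

lemma inO_one : inO v (1 : F) := ValGe.of_le hv.v_one.ge

lemma left_mem_spanL (x y : F × F) : x ∈ spanL v x y := by
  simpa using smul_add_smul_mem_spanL (x := x) (y := y) hv.inO_one (valGe_zero v 0)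

lemma right_mem_spanL (x y : F × F) : y ∈ spanL v x y := by
  simpa using smul_add_smul_mem_spanL (x := x) (y := y) (valGe_zero v 0) hv.inO_one

lemma spanL_subset {x y p q : F × F} (hx : x ∈ spanL v p q) (hy : y ∈ spanL v p q) :
    spanL v x y ⊆ spanL v p q := by
  rintro _ ⟨a, b, ha, hb, rfl⟩
  obtain ⟨a₁, b₁, ha₁, hb₁, rfl⟩ := hx
  obtain ⟨a₂, b₂, ha₂, hb₂, rfl⟩ := hy
  refine ⟨a * a₁ + b * a₂, a * b₁ + b * b₂, ?_, ?_, by module⟩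
  · exact hv.valGe_add (hv.valGe_mul ha ha₁) (hv.valGe_mul hb ha₂)
  · exact hv.valGe_add (hv.valGe_mul ha hb₁) (hv.valGe_mul hb hb₂)

lemma spanL_smul_add_smul {x y : F × F} {a b c d : F} (ha : inO v a) (hb : inO v b)
    (hc : inO v c) (hd : inO v d) (hΔ : a * d - b * c ≠ 0) (hvΔ : v (a * d - b * c) = 0) :
    spanL v (a • x + b • y) (c • x + d • y) = spanL v x y := by
  have hΔinv : inO v (a * d - b * c)⁻¹ := ValGe.of_le (by rw [hv.v_inv hΔ, hvΔ, neg_zero])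
  refine subset_antisymm (hv.spanL_subset (smul_add_smul_mem_spanL ha hb)
    (smul_add_smul_mem_spanL hc hd)) (hv.spanL_subset ?_ ?_)
  · convert smul_add_smul_mem_spanL (hv.valGe_mul hd hΔinv)
      (hv.valGe_neg (hv.valGe_mul hb hΔinv)) using 1
    match_scalars
    · linear_combination -(mul_inv_cancel₀ hΔ)
    · ring
  · convert smul_add_smul_mem_spanL (hv.valGe_neg (hv.valGe_mul hc hΔinv))
      (hv.valGe_mul ha hΔinv) using 1
    match_scalars
    · linear_combination -(mul_inv_cancel₀ hΔ)
    · ring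

lemma mem_dualL_spanL_iff {x y z : F × F} :
    z ∈ dualL σ v (spanL v x y) ↔ inO v (herm σ z x) ∧ inO v (herm σ z y) := by
  refine ⟨fun hz => ⟨hz x (hv.left_mem_spanL x y), hz y (hv.right_mem_spanL x y)⟩, ?_⟩
  rintro ⟨hx, hy⟩ _ ⟨a, b, ha, hb, rfl⟩
  simpa using hv.valGe_add (hv.valGe_mul (hv.valGe_map ha) hx) (hv.valGe_mul (hv.valGe_map hb) hy)

lemma isLattice_spanPow {x w : F × F} (hd : det2 x w ≠ 0) (a b : ℤ) :
    IsLattice v (spanPow π v x w a b) := by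
  refine ⟨_, _, linearIndependent_iff_det2_ne_zero.mpr ?_, rfl⟩
  rw [det2_smul_smul]
  exact mul_ne_zero (mul_ne_zero (zpow_ne_zero _ hv.π_ne_zero) (zpow_ne_zero _ hv.π_ne_zero)) hd

lemma mem_spanPow_iff {x w : F × F} (hd : det2 x w ≠ 0) {s t : F} {a b : ℤ} :
    s • x + t • w ∈ spanPow π v x w a b ↔ ValGe v s a ∧ ValGe v t b := by
  constructor
  · rintro ⟨s', t', hs', ht', he⟩
    rw [smul_smul, smul_smul] at he
    obtain ⟨rfl, rfl⟩ := smul_add_smul_injective hd he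
    exact ⟨by simpa using hv.valGe_mul hs' (hv.valGe_zpow a),
      by simpa using hv.valGe_mul ht' (hv.valGe_zpow b)⟩
  · rintro ⟨hs, ht⟩
    refine ⟨s * π ^ (-a), t * π ^ (-b), by simpa using hv.valGe_mul hs (hv.valGe_zpow (-a)),
      by simpa using hv.valGe_mul ht (hv.valGe_zpow (-b)), ?_⟩
    simp only [smul_smul, mul_assoc, ← zpow_add₀ hv.π_ne_zero, neg_add_cancel, zpow_zero, mul_one]

lemma spanPow_mono {x w : F × F} {a b a' b' : ℤ} (ha : a ≤ a') (hb : b ≤ b') :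
    spanPow π v x w a' b' ⊆ spanPow π v x w a b := by
  have hπ := hv.π_ne_zero
  refine hv.spanL_subset ?_ ?_
  · have he : π ^ a' • x = π ^ (a' - a) • π ^ a • x + (0 : F) • π ^ b • w := by
      rw [smul_smul, ← zpow_add₀ hπ, sub_add_cancel, zero_smul, add_zero]
    rw [he]
    exact smul_add_smul_mem_spanL ((hv.valGe_zpow _).mono (by omega)) (valGe_zero v 0)
  · have he : π ^ b' • w = (0 : F) • π ^ a • x + π ^ (b' - b) • π ^ b • w := by
      rw [zero_smul, zero_add, smul_smul, ← zpow_add₀ hπ, sub_add_cancel]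
    rw [he]
    exact smul_add_smul_mem_spanL (valGe_zero v 0) ((hv.valGe_zpow _).mono (by omega))

lemma image_smul_spanPow (x w : F × F) (a b : ℤ) :
    (π • ·) '' spanPow π v x w a b = spanPow π v x w (a + 1) (b + 1) := by
  rw [spanPow, image_smul_spanL, spanPow, smul_smul, smul_smul, ← zpow_one_add₀ hv.π_ne_zero,
    ← zpow_one_add₀ hv.π_ne_zero, add_comm 1 a, add_comm 1 b]

lemma mem_dualL_spanPow_iff {x w z : F × F} {a b : ℤ} :
    z ∈ dualL σ v (spanPow π v x w a b) ↔
      ValGe v (herm σ z x) (-a) ∧ ValGe v (herm σ z w) (-b) := by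
  have hσ : ∀ n : ℤ, σ (π ^ n) ≠ 0 ∧ v (σ (π ^ n)) = n := fun n =>
    ⟨(map_ne_zero σ).mpr (zpow_ne_zero n hv.π_ne_zero), by rw [hv.v_σ, hv.v_zpow]⟩
  rw [spanPow, hv.mem_dualL_spanL_iff, herm_smul_right, herm_smul_right,
    inO_iff_valGe, hv.valGe_mul_iff (hσ a).1, inO_iff_valGe, hv.valGe_mul_iff (hσ b).1,
    (hσ a).2, (hσ b).2, zero_sub, zero_sub]

lemma v_herm_smul_self {u : F} (hu : u ≠ 0) {b : F × F} (hb : herm σ b b ≠ 0) :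
    herm σ (u • b) (u • b) ≠ 0 ∧ v (herm σ (u • b) (u • b)) = 2 * v u + v (herm σ b b) := by
  have hσu : σ u ≠ 0 := (map_ne_zero σ).mpr hu
  rw [herm_smul_left, herm_smul_right]
  refine ⟨mul_ne_zero hu (mul_ne_zero hσu hb), ?_⟩
  rw [hv.v_mul _ _ hu (mul_ne_zero hσu hb), hv.v_mul _ _ hσu hb, hv.v_σ]
  ring

lemma not_mem_image_smul_of_inO_herm {Λ : Set (F × F)} (hΛ : ∀ z ∈ Λ, inO v (herm σ z z))
    {c : F × F} (hc : herm σ c c ≠ 0) (hvc : v (herm σ c c) < 2) : c ∉ (π • ·) '' Λ := by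
  rw [Set.image_smul, Set.mem_smul_set_iff_inv_smul_mem₀ hv.π_ne_zero]
  intro hmem
  obtain ⟨hne, hval⟩ := hv.v_herm_smul_self (inv_ne_zero hv.π_ne_zero) hc
  rw [hv.v_inv hv.π_ne_zero, hv.v_π] at hval
  exact ValGe.not_of_lt hne (by omega) (hΛ _ hmem)

lemma exists_basis_of_not_mem_image_smul {Λ : Set (F × F)} (hΛ : IsLattice v Λ) {x : F × F}
    (hx : x ∈ Λ) (hxn : x ∉ (π • ·) '' Λ) : ∃ w, det2 x w ≠ 0 ∧ Λ = spanL v x w := by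
  obtain ⟨u, w₀, hind, rfl⟩ := hΛ
  have hd := linearIndependent_iff_det2_ne_zero.mp hind
  obtain ⟨a, b, ha, hb, rfl⟩ := hx
  have hbasis : ∀ c d : F, inO v c → inO v d → a * d - b * c ≠ 0 → v (a * d - b * c) = 0 →
      ∃ w, det2 (a • u + b • w₀) w ≠ 0 ∧ spanL v u w₀ = spanL v (a • u + b • w₀) w :=
    fun c d hc hd' hΔ hvΔ => ⟨c • u + d • w₀, by rw [det2_smul_add_smul]; exact mul_ne_zero hΔ hd,
      (hv.spanL_smul_add_smul ha hb hc hd' hΔ hvΔ).symm⟩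
  rw [← spanPow_zero_zero π, hv.image_smul_spanPow, zero_add, hv.mem_spanPow_iff hd,
    not_and_or] at hxn
  rcases hxn with hxn | hxn
  · obtain ⟨ha0, hva⟩ := ValGe.unit_of_not_one ha hxn
    exact hbasis 0 1 (valGe_zero v 0) hv.inO_one (by simpa using ha0) (by simpa using hva)
  · obtain ⟨hb0, hvb⟩ := ValGe.unit_of_not_one hb hxn
    exact hbasis (-1) 0 (hv.valGe_neg hv.inO_one) (valGe_zero v 0) (by simpa using hb0)
      (by simpa using hvb)

lemma valGe_herm_of_isVertex2 {Λ : Set (F × F)} (hΛ : IsVertex2 σ π v Λ) {z z' : F × F}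
    (hz : z ∈ Λ) (hz' : z' ∈ Λ) : ValGe v (herm σ z z') (-1) := by
  have hπz : π • z ∈ dualL σ v Λ := by
    rw [hΛ.2]
    exact ⟨z, hz, rfl⟩
  have := hπz z' hz'
  rwa [herm_smul_left, inO_iff_valGe, hv.valGe_mul_iff hv.π_ne_zero, hv.v_π, zero_sub] at this

lemma inO_herm_self_of_isVertex2 {Λ : Set (F × F)} (hΛ : IsVertex2 σ π v Λ) {z : F × F}
    (hz : z ∈ Λ) : inO v (herm σ z z) := by
  by_cases h0 : herm σ z z = 0
  · exact Or.inl h0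
  -- `q(z) ∈ F₀` has even valuation, and it is at least `-1`
  have h := (hv.valGe_herm_of_isVertex2 hΛ hz hz).le_v h0
  obtain ⟨r, hr⟩ := hv.even_v_of_σ_eq _ (herm_swap hv.σ_σ z z).symm h0
  exact ValGe.of_le (by omega)

lemma two_mul_le_of_zpow_smul_mem {Λ : Set (F × F)} (hΛ : IsVertex2 σ π v Λ) {b : F × F}
    (hb : herm σ b b ≠ 0) {m : ℤ} (hm : π ^ (-m) • b ∈ Λ) : 2 * m ≤ v (herm σ b b) := by
  obtain ⟨hq, hval⟩ := hv.v_herm_smul_self (zpow_ne_zero (-m) hv.π_ne_zero) hb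
  have := ValGe.le_v (hv.inO_herm_self_of_isVertex2 hΛ hm) hq
  rw [hval, hv.v_zpow] at this
  omega

section Basis

variable {x w : F × F}

lemma v_herm_basis_of_isVertex2 (hd : det2 x w ≠ 0) (hΛ : IsVertex2 σ π v (spanL v x w))
    (hqx : inO v (herm σ x x)) : herm σ x w ≠ 0 ∧ v (herm σ x w) = -1 := by
  have hnot : ¬ inO v (herm σ x w) := by
    intro hin
    have hx : (1 : F) • x + (0 : F) • w ∈ dualL σ v (spanL v x w) := by
      simpa [hv.mem_dualL_spanL_iff] using And.intro hqx hin
    rw [hΛ.2, ← spanPow_zero_zero π, hv.image_smul_spanPow, hv.mem_spanPow_iff hd] at hx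
    exact ValGe.not_of_lt one_ne_zero (by rw [hv.v_one]; norm_num) hx.1
  simp only [inO_iff_valGe, ValGe, not_or, not_le] at hnot
  have h := (hv.valGe_herm_of_isVertex2 hΛ (hv.left_mem_spanL x w) (hv.right_mem_spanL x w)).le_v
    hnot.1
  exact ⟨hnot.1, by omega⟩

lemma gram_det_of_isVertex2 (hd : det2 x w ≠ 0) (hΛ : IsVertex2 σ π v (spanL v x w))
    (hqx : inO v (herm σ x x)) :
    herm σ x x * herm σ w w - herm σ x w * herm σ w x ≠ 0 ∧
      v (herm σ x x * herm σ w w - herm σ x w * herm σ w x) = -2 := by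
  obtain ⟨hxw, hvxw⟩ := hv.v_herm_basis_of_isVertex2 hd hΛ hqx
  have hwx : herm σ w x = σ (herm σ x w) := herm_swap hv.σ_σ x w
  have hprod : herm σ x w * herm σ w x ≠ 0 := by
    rw [hwx]
    exact mul_ne_zero hxw ((map_ne_zero σ).mpr hxw)
  have hvprod : v (-(herm σ x w * herm σ w x)) = -2 := by
    rw [hv.v_neg hprod, hwx, hv.v_mul _ _ hxw ((map_ne_zero σ).mpr hxw), hv.v_σ, hvxw]
    norm_num
  have hqq := hv.valGe_mul hqx (hv.inO_herm_self_of_isVertex2 hΛ (hv.right_mem_spanL x w))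
  have := hv.v_add_of_lt (neg_ne_zero.mpr hprod) (hqq.mono (by omega))
  rwa [hvprod, neg_add_eq_sub] at this

/-- Cramer's rule for the Gram matrix of the basis `x, w`. -/
lemma valGe_coords_of_valGe_herm (hd : det2 x w ≠ 0) (hΛ : IsVertex2 σ π v (spanL v x w))
    {e : ℤ} (he : 0 ≤ e) (hqx : ValGe v (herm σ x x) e) {s t : F} {i j : ℤ}
    (hi : ValGe v (herm σ (s • x + t • w) x) i) (hj : ValGe v (herm σ (s • x + t • w) w) j) :
    ValGe v s (min i (j - 1) + 2) ∧ ValGe v t (min (j + e) (i - 1) + 2) := by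
  obtain ⟨hΔ, hvΔ⟩ := hv.gram_det_of_isVertex2 hd hΛ (hqx.mono he)
  have hxw := hv.valGe_herm_of_isVertex2 hΛ (hv.left_mem_spanL x w) (hv.right_mem_spanL x w)
  have hwx := hv.valGe_herm_of_isVertex2 hΛ (hv.right_mem_spanL x w) (hv.left_mem_spanL x w)
  have hqw := hv.inO_herm_self_of_isVertex2 hΛ (hv.right_mem_spanL x w)
  have hs := hv.valGe_sub ((hv.valGe_mul hi hqw).mono (min_le_left i (j - 1) |>.trans (by omega)))
    ((hv.valGe_mul hj hwx).mono (min_le_right i (j - 1)))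
  have ht := hv.valGe_sub ((hv.valGe_mul hj hqx).mono (min_le_left (j + e) (i - 1)))
    ((hv.valGe_mul hi hxw).mono (min_le_right (j + e) (i - 1)))
  simp only [herm_add_left, herm_smul_left] at hs ht
  set qx := herm σ x x
  set qw := herm σ w w
  set Hxw := herm σ x w
  set Hwx := herm σ w x
  rw [show (s * qx + t * Hwx) * qw - (s * Hxw + t * qw) * Hwx = (qx * qw - Hxw * Hwx) * s by ring,
    hv.valGe_mul_iff hΔ, hvΔ, sub_neg_eq_add] at hs
  rw [show (s * Hxw + t * qw) * qx - (s * qx + t * Hwx) * Hxw = (qx * qw - Hxw * Hwx) * t by ring,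
    hv.valGe_mul_iff hΔ, hvΔ, sub_neg_eq_add] at ht
  exact ⟨hs, ht⟩

lemma valGe_herm_of_valGe_coords (hΛ : IsVertex2 σ π v (spanL v x w)) {e : ℤ}
    (hqx : ValGe v (herm σ x x) e) {s t : F} {p r : ℤ} (hs : ValGe v s p) (ht : ValGe v t r) :
    ValGe v (herm σ (s • x + t • w) x) (min (p + e) (r - 1)) ∧
      ValGe v (herm σ (s • x + t • w) w) (min (p - 1) r) := by
  have hxw := hv.valGe_herm_of_isVertex2 hΛ (hv.left_mem_spanL x w) (hv.right_mem_spanL x w)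
  have hwx := hv.valGe_herm_of_isVertex2 hΛ (hv.right_mem_spanL x w) (hv.left_mem_spanL x w)
  have hqw := hv.inO_herm_self_of_isVertex2 hΛ (hv.right_mem_spanL x w)
  simp only [herm_add_left, herm_smul_left]
  exact ⟨hv.valGe_add ((hv.valGe_mul hs hqx).mono (min_le_left _ _))
      ((hv.valGe_mul ht hwx).mono (min_le_right _ _)),
    hv.valGe_add ((hv.valGe_mul hs hxw).mono (min_le_left _ _))
      ((hv.valGe_mul ht hqw).mono (min_le_right _ _ |>.trans (by omega)))⟩

lemma dualL_spanPow (hd : det2 x w ≠ 0) (hΛ : IsVertex2 σ π v (spanL v x w)) {e : ℤ} (he : 0 ≤ e)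
    (hqx : ValGe v (herm σ x x) e) {a b a' b' : ℤ} (h₁ : a' ≤ min (-a) (-b - 1) + 2)
    (h₂ : b' ≤ min (-b + e) (-a - 1) + 2) (h₃ : -a ≤ min (a' + e) (b' - 1))
    (h₄ : -b ≤ min (a' - 1) b') :
    dualL σ v (spanPow π v x w a b) = spanPow π v x w a' b' := by
  ext z
  obtain ⟨s, t, rfl⟩ := exists_eq_smul_add_smul hd z
  rw [hv.mem_dualL_spanPow_iff, hv.mem_spanPow_iff hd]
  constructor
  · rintro ⟨hi, hj⟩
    obtain ⟨hs, ht⟩ := hv.valGe_coords_of_valGe_herm hd hΛ he hqx hi hj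
    exact ⟨hs.mono h₁, ht.mono h₂⟩
  · rintro ⟨hs, ht⟩
    obtain ⟨hi, hj⟩ := hv.valGe_herm_of_valGe_coords hΛ hqx hs ht
    exact ⟨hi.mono h₃, hj.mono h₄⟩

lemma isVertex0_spanPow_zero_one (hd : det2 x w ≠ 0) (hΛ : IsVertex2 σ π v (spanL v x w))
    (hqx : inO v (herm σ x x)) : IsVertex0 σ v (spanPow π v x w 0 1) :=
  ⟨hv.isLattice_spanPow hd 0 1,
    hv.dualL_spanPow hd hΛ le_rfl hqx (by omega) (by omega) (by omega) (by omega)⟩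

lemma isVertex2_spanPow_neg_one_one (hd : det2 x w ≠ 0) (hΛ : IsVertex2 σ π v (spanL v x w))
    (hqx : ValGe v (herm σ x x) 2) : IsVertex2 σ π v (spanPow π v x w (-1) 1) :=
  ⟨hv.isLattice_spanPow hd (-1) 1, by
    rw [hv.image_smul_spanPow]
    exact hv.dualL_spanPow hd hΛ zero_le_two hqx (by omega) (by omega) (by omega) (by omega)⟩

lemma adjV_spanPow (hd : det2 x w ≠ 0) (hΛ : IsVertex2 σ π v (spanL v x w))
    (hqx : ValGe v (herm σ x x) 2) : AdjV σ π v (spanL v x w) (spanPow π v x w (-1) 1) := by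
  have hinter : spanL v x w ∩ spanPow π v x w (-1) 1 = spanPow π v x w 0 1 := by
    ext z
    obtain ⟨s, t, rfl⟩ := exists_eq_smul_add_smul hd z
    rw [Set.mem_inter_iff, ← spanPow_zero_zero π, hv.mem_spanPow_iff hd, hv.mem_spanPow_iff hd,
      hv.mem_spanPow_iff hd]
    exact ⟨fun ⟨⟨hs, _⟩, _, ht⟩ => ⟨hs, ht⟩,
      fun ⟨hs, ht⟩ => ⟨⟨hs, ht.mono zero_le_one⟩, hs.mono (by norm_num), ht⟩⟩
  refine ⟨hΛ, hv.isVertex2_spanPow_neg_one_one hd hΛ hqx, fun heq => ?_,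
    hinter ▸ hv.isVertex0_spanPow_zero_one hd hΛ (hqx.mono zero_le_two)⟩
  have hmem : π ^ (-1 : ℤ) • x + (0 : F) • w ∈ spanL v x w := by
    rw [zero_smul, add_zero, heq]
    exact hv.left_mem_spanL _ _
  rw [← spanPow_zero_zero π, hv.mem_spanPow_iff hd] at hmem
  exact ValGe.not_of_lt (zpow_ne_zero _ hv.π_ne_zero) (by rw [hv.v_zpow]; norm_num) hmem.1

end Basis

lemma exists_adjV_inv_smul_mem {Λ : Set (F × F)} (hΛ : IsVertex2 σ π v Λ) {x : F × F}
    (hx : x ∈ Λ) (hxn : x ∉ (π • ·) '' Λ) (hqx : ValGe v (herm σ x x) 2) :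
    ∃ Λ₁, AdjV σ π v Λ Λ₁ ∧ π⁻¹ • x ∈ Λ₁ := by
  obtain ⟨w, hd, rfl⟩ := hv.exists_basis_of_not_mem_image_smul hΛ.1 hx hxn
  refine ⟨_, hv.adjV_spanPow hd hΛ hqx, ?_⟩
  rw [← zpow_neg_one]
  exact hv.left_mem_spanL _ _

lemma v_herm_self_nonpos_of_orthogonal {c d : F × F} (hP : IsVertex0 σ v (spanL v c d))
    (hdet : det2 c d ≠ 0) (hdc : herm σ d c = 0) : herm σ d d ≠ 0 ∧ v (herm σ d d) ≤ 0 := by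
  by_contra hbad
  have hdd : ValGe v (herm σ d d) 1 := by
    by_cases h0 : herm σ d d = 0
    · exact Or.inl h0
    · exact ValGe.of_le (by rw [not_and, not_le] at hbad; exact hbad h0)
  have hmem : (0 : F) • c + π⁻¹ • d ∈ dualL σ v (spanL v c d) := by
    rw [zero_smul, zero_add, hv.mem_dualL_spanL_iff, herm_smul_left, herm_smul_left, hdc,
      mul_zero, inO_iff_valGe, inO_iff_valGe, hv.valGe_mul_iff (inv_ne_zero hv.π_ne_zero),
      hv.v_inv hv.π_ne_zero, hv.v_π]
    exact ⟨valGe_zero v 0, hdd⟩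
  rw [hP.2, ← spanPow_zero_zero π, hv.mem_spanPow_iff hdet] at hmem
  exact ValGe.not_of_lt (inv_ne_zero hv.π_ne_zero) (by rw [hv.v_inv hv.π_ne_zero, hv.v_π]; norm_num)
    hmem.2

lemma exists_orthogonal_basis {P : Set (F × F)} (hP : IsVertex0 σ v P) {c : F × F} (hc : c ∈ P)
    (hqc : herm σ c c ≠ 0) (hvqc : v (herm σ c c) = 0) :
    ∃ d, P = spanL v c d ∧ det2 c d ≠ 0 ∧ herm σ d c = 0 ∧
      herm σ d d ≠ 0 ∧ v (herm σ d d) ≤ 0 := by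
  obtain ⟨w, hdet, rfl⟩ := hv.exists_basis_of_not_mem_image_smul hP.1 hc
    (hv.not_mem_image_smul_of_inO_herm (fun z hz => hP.inO_herm hz hz) hqc (by omega))
  set a := herm σ w c / herm σ c c
  have ha : inO v (-a) := by
    refine hv.valGe_neg ?_
    have hwc := hP.inO_herm (hv.right_mem_spanL c w) hc
    have e : herm σ c c * a = herm σ w c := mul_div_cancel₀ _ hqc
    rw [inO_iff_valGe, ← e, hv.valGe_mul_iff hqc, hvqc, sub_zero] at hwc
    exact hwc
  have hspan : spanL v c w = spanL v c (w - a • c) := by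
    have := hv.spanL_smul_add_smul (x := c) (y := w) hv.inO_one (valGe_zero v 0) ha hv.inO_one
      (by simp) (by simpa using hv.v_one)
    rwa [one_smul, zero_smul, add_zero, one_smul, neg_smul, neg_add_eq_sub, eq_comm] at this
  have hdet' : det2 c (w - a • c) ≠ 0 := by
    convert hdet using 1
    simp only [det2, Prod.fst_sub, Prod.snd_sub, Prod.smul_fst, Prod.smul_snd, smul_eq_mul]
    ring
  have hdc : herm σ (w - a • c) c = 0 := by
    rw [sub_eq_add_neg, herm_add_left, ← neg_smul, herm_smul_left, neg_mul, div_mul_cancel₀ _ hqc,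
      add_neg_cancel]
  rw [hspan] at hP ⊢
  exact ⟨w - a • c, rfl, hdet', hdc, hv.v_herm_self_nonpos_of_orthogonal hP hdet' hdc⟩

lemma mem_of_inO_herm {P : Set (F × F)} (hP : IsVertex0 σ v P) {c : F × F} (hc : c ∈ P)
    (hqc : herm σ c c ≠ 0) (hvqc : v (herm σ c c) = 0) {z : F × F}
    (hzc : inO v (herm σ z c)) (hzz : inO v (herm σ z z)) : z ∈ P := by
  obtain ⟨d, rfl, hdet, hdc, hdd, hvdd⟩ := hv.exists_orthogonal_basis hP hc hqc hvqc
  obtain ⟨s, t, rfl⟩ := exists_eq_smul_add_smul hdet z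
  have hcd : herm σ c d = 0 := by rw [herm_swap hv.σ_σ, hdc, map_zero]
  have hs : inO v s := by
    rwa [herm_add_left, herm_smul_left, herm_smul_left, hdc, mul_zero, add_zero, inO_iff_valGe,
      mul_comm, hv.valGe_mul_iff hqc, hvqc, sub_zero] at hzc
  have htt : ValGe v (t * σ t * herm σ d d) 0 := by
    have := hv.valGe_sub hzz
      (hv.valGe_mul (hv.valGe_mul hs (hv.valGe_map hs)) (ValGe.of_le hvqc.ge))
    convert this using 2
    simp only [herm_add_left, herm_add_right, herm_smul_left, herm_smul_right, hdc, hcd]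
    ring
  refine smul_add_smul_mem_spanL hs ?_
  by_cases ht : t = 0
  · exact Or.inl ht
  have hσt : σ t ≠ 0 := (map_ne_zero σ).mpr ht
  have h := htt.le_v (mul_ne_zero (mul_ne_zero ht hσt) hdd)
  rw [hv.v_mul _ _ (mul_ne_zero ht hσt) hdd, hv.v_mul _ _ ht hσt, hv.v_σ] at h
  exact ValGe.of_le (by omega)

lemma isVertex0_eq_of_mem {P Q : Set (F × F)} (hP : IsVertex0 σ v P) (hQ : IsVertex0 σ v Q)
    {c : F × F} (hcP : c ∈ P) (hcQ : c ∈ Q) (hqc : herm σ c c ≠ 0)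
    (hvqc : v (herm σ c c) = 0) : P = Q :=
  Set.ext fun _ =>
    ⟨fun hz => hv.mem_of_inO_herm hQ hcQ hqc hvqc (hP.inO_herm hz hcP) (hP.inO_herm hz hz),
      fun hz => hv.mem_of_inO_herm hP hcP hqc hvqc (hQ.inO_herm hz hcQ) (hQ.inO_herm hz hz)⟩

/-- Writing `Λ = ⟨c, w⟩`, the self-dual lattice `⟨c, π w⟩ ⊆ Λ` contains `c`, so it is `Λb`. -/
lemma subset_of_isVertex2_of_mem {Λ Λb : Set (F × F)} (hΛ : IsVertex2 σ π v Λ)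
    (hΛb : IsVertex0 σ v Λb) {c : F × F} (hcΛ : c ∈ Λ) (hcb : c ∈ Λb) (hqc : herm σ c c ≠ 0)
    (hvqc : v (herm σ c c) = 0) : Λb ⊆ Λ := by
  obtain ⟨w, hd, rfl⟩ := hv.exists_basis_of_not_mem_image_smul hΛ.1 hcΛ
    (hv.not_mem_image_smul_of_inO_herm (fun z hz => hv.inO_herm_self_of_isVertex2 hΛ hz) hqc
      (by omega))
  have hN := hv.isVertex0_spanPow_zero_one hd hΛ (ValGe.of_le hvqc.ge)
  have hcN : c ∈ spanPow π v c w 0 1 := by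
    simpa [spanPow] using hv.left_mem_spanL c (π • w)
  rw [← hv.isVertex0_eq_of_mem hN hΛb hcN hcb hqc hvqc, ← spanPow_zero_zero π]
  exact hv.spanPow_mono le_rfl zero_le_one

lemma exists_walk_of_pow_smul_mem {Λb : Set (F × F)} (hΛb : IsVertex0 σ v Λb) {c : F × F}
    (hcb : c ∈ Λb) (hqc : herm σ c c ≠ 0) (hvqc : v (herm σ c c) = 0) (j : ℕ)
    {Λ : Set (F × F)} (hΛ : IsVertex2 σ π v Λ) (hj : π ^ j • c ∈ Λ) :
    ∃ P, IsVertex2 σ π v P ∧ Λb ⊆ P ∧ ∃ l ≤ j, WalkN σ π v l Λ P := by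
  induction j generalizing Λ with
  | zero =>
    exact ⟨Λ, hΛ, hv.subset_of_isVertex2_of_mem hΛ hΛb (by simpa using hj) hcb hqc hvqc,
      0, le_rfl, .refl Λ⟩
  | succ j ih =>
    by_cases hj' : π ^ j • c ∈ Λ
    · obtain ⟨P, hP, hsub, l, hl, hw⟩ := ih hΛ hj'
      exact ⟨P, hP, hsub, l, hl.trans j.le_succ, hw⟩
    have hinv : π⁻¹ • π ^ (j + 1) • c = π ^ j • c := by
      rw [smul_smul, pow_succ', inv_mul_cancel_left₀ hv.π_ne_zero]
    have hxn : π ^ (j + 1) • c ∉ (π • ·) '' Λ := by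
      rwa [Set.image_smul, Set.mem_smul_set_iff_inv_smul_mem₀ hv.π_ne_zero, hinv]
    have hqx : ValGe v (herm σ (π ^ (j + 1) • c) (π ^ (j + 1) • c)) 2 := by
      obtain ⟨-, hval⟩ := hv.v_herm_smul_self (pow_ne_zero (j + 1) hv.π_ne_zero) hqc
      rw [hv.v_pow, hvqc] at hval
      exact ValGe.of_le (by omega)
    obtain ⟨Λ₁, hadj, hmem⟩ := hv.exists_adjV_inv_smul_mem hΛ hj hxn hqx
    obtain ⟨P, hP, hsub, l, hl, hw⟩ := ih hadj.2.1 (hinv ▸ hmem)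
    exact ⟨P, hP, hsub, l + 1, by omega, hw.cons hadj⟩

end IsRamifiedValuation

theorem statement5_general
    (σ : F →+* F) (π : F) (v : F → ℤ)
    (hinv : ∀ x, σ (σ x) = x)
    (hσπ : σ π = -π)
    (hπ : π ≠ 0)
    (hvπ : v π = 1)
    (hvσ : ∀ x, v (σ x) = v x)
    (hvmul : ∀ x y : F, x ≠ 0 → y ≠ 0 → v (x * y) = v x + v y)
    (hvadd : ∀ x y : F, x ≠ 0 → y ≠ 0 → x + y ≠ 0 → min (v x) (v y) ≤ v (x + y))
    (heven : ∀ x : F, σ x = x → x ≠ 0 → Even (v x))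
    (b : F × F) (hb : herm σ b b ≠ 0)
    (α : ℤ) (hα : v (herm σ b b) = 2 * α)
    (Λb : Set (F × F)) (hΛb : IsVertex0 σ v Λb)
    (hbin : (π ^ (-α)) • b ∈ Λb)
    (M M' : Set (F × F))
    (hMc : Λb ⊆ M) (hM'c : Λb ⊆ M')
    (honly : ∀ P : Set (F × F), IsVertex2 σ π v P → Λb ⊆ P → P = M ∨ P = M')
    (Λ : Set (F × F)) (hΛ : IsVertex2 σ π v Λ)
    (k k' : ℕ) (hk : dGIs σ π v Λ M k) (hk' : dGIs σ π v Λ M' k') :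
    nIs π b Λ (α - min (k : ℤ) (k' : ℤ)) := by
  have hv : IsRamifiedValuation σ π v := ⟨hinv, hσπ, hπ, hvπ, hvσ, hvmul, hvadd, heven⟩
  have hpow : ∀ n : ℤ, π ^ (-(α - n)) • b = π ^ n • π ^ (-α) • b := fun n => by
    rw [smul_smul, ← zpow_add₀ hπ, neg_sub, sub_eq_add_neg]
  obtain ⟨hqc, hvqc⟩ := hv.v_herm_smul_self (zpow_ne_zero (-α) hπ) hb
  rw [hv.v_zpow, hα] at hvqc
  refine ⟨?_, fun m hm => ?_⟩
  · rcases min_choice (k : ℤ) k' with h | h <;> rw [h, Set.mem_ofPred_eq, hpow, zpow_natCast]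
    · exact hk.1.smul_mem (hMc hbin)
    · exact hk'.1.smul_mem (hM'c hbin)
  have hmα := hv.two_mul_le_of_zpow_smul_mem hΛ hb hm
  obtain ⟨j, hj⟩ : ∃ j : ℕ, (j : ℤ) = α - m := ⟨(α - m).toNat, Int.toNat_of_nonneg (by omega)⟩
  have hjmem : π ^ j • π ^ (-α) • b ∈ Λ := by
    rwa [← zpow_natCast, ← hpow, hj, sub_sub_cancel]
  obtain ⟨P, hP, hsub, l, hl, hw⟩ :=
    hv.exists_walk_of_pow_smul_mem hΛb hbin hqc (by omega) j hΛ hjmem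
  have hmin : min (k : ℤ) k' ≤ l := by
    rcases honly P hP hsub with rfl | rfl
    · exact (min_le_left _ _).trans (Nat.cast_le.mpr (hk.2 hw))
    · exact (min_le_right _ _).trans (Nat.cast_le.mpr (hk'.2 hw))
  omega

theorem statement5
    (σ : F →+* F) (π : F) (v : F → ℤ)
    (hinv : ∀ x, σ (σ x) = x)
    (hσπ : σ π = -π)
    (hπ : π ≠ 0)
    (h2 : (2 : F) ≠ 0)
    (hvπ : v π = 1)
    (hv2 : v (2 : F) = 0)
    (hvσ : ∀ x, v (σ x) = v x)
    (hvmul : ∀ x y : F, x ≠ 0 → y ≠ 0 → v (x * y) = v x + v y)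
    (hvadd : ∀ x y : F, x ≠ 0 → y ≠ 0 → x + y ≠ 0 → min (v x) (v y) ≤ v (x + y))
    (heven : ∀ x : F, σ x = x → x ≠ 0 → Even (v x))
    (b : F × F) (hb : herm σ b b ≠ 0)
    (α : ℤ) (hα : v (herm σ b b) = 2 * α)
    (Λb : Set (F × F)) (hΛb : IsVertex0 σ v Λb)
    (hbin : (π ^ (-α)) • b ∈ Λb) (hbout : (π ^ (-α)) • b ∉ (fun x => π • x) '' Λb)
    (M M' : Set (F × F)) (hM : IsVertex2 σ π v M) (hM' : IsVertex2 σ π v M')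
    (hMc : Λb ⊆ M) (hM'c : Λb ⊆ M') (hMM : M ≠ M')
    (honly : ∀ P : Set (F × F), IsVertex2 σ π v P → Λb ⊆ P → P = M ∨ P = M')
    (Λ : Set (F × F)) (hΛ : IsVertex2 σ π v Λ)
    (k k' : ℕ) (hk : dGIs σ π v Λ M k) (hk' : dGIs σ π v Λ M' k') :
    nIs π b Λ (α - min (k : ℤ) (k' : ℤ)) :=
  statement5_general σ π v hinv hσπ hπ hvπ hvσ hvmul hvadd heven b hb α hα Λb hΛb hbin M M' hMc hM'c
    honly Λ hΛ k k' hk hk'
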